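/- Let G be a finite simple graph in which no two distinct vertices have the same neighborhood, and let H be an induced subgraph of G with r(H) = r(G). If v is a vertex of G not in H, then for every vertex u of H, the neighborhood of v restricted to H differs from the neighborhood of u restricted to H. -/

import Mathlib

/-!
The columns of the adjacency matrix indexed by `s` span a space whose dimension lies between
`r(H)` and `r(G)`, so they span the whole column space. If `N_H(u) = N_H(v)`, the coordinates
`u` and `v` agree on each of these columns, hence on every column, i.e. `N(u) = N(v)`.
-/

namespace Matrix

variable {m m₀ n n₀ : Type*}

theorem rank_submatrix_id_eq_of_rank_submatrix_eq {R : Type*} [CommSemiring R]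
    [StrongRankCondition R] [Fintype n] [Fintype n₀] (A : Matrix m n R) (r : m₀ → m)
    (c : n₀ → n) (h : (A.submatrix r c).rank = A.rank) :
    (A.submatrix id c).rank = A.rank :=
  (rank_submatrix_le A id c).antisymm <| h ▸ rank_submatrix_le (A.submatrix id c) r id

theorem row_eq_of_rank_submatrix_id_eq {K : Type*} [Field K] [Finite m] [Fintype n] [Fintype n₀]
    (A : Matrix m n K) (c : n₀ → n) (hrank : (A.submatrix id c).rank = A.rank) {u v : m}
    (huv : ∀ j, A u (c j) = A v (c j)) : A u = A v := by
  let agree : Submodule K (m → K) :=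
    LinearMap.ker (LinearMap.proj (R := K) (φ := fun _ : m => K) u - LinearMap.proj v)
  have hle : Submodule.span K (Set.range (A.submatrix id c).col) ≤
      Submodule.span K (Set.range A.col) :=
    Submodule.span_mono <| Set.range_subset_iff.2 fun j => ⟨c j, rfl⟩
  have hspan := Submodule.eq_of_le_of_finrank_eq hle <| by
    rwa [← rank_eq_finrank_span_cols, ← rank_eq_finrank_span_cols]
  have hagree : Submodule.span K (Set.range A.col) ≤ agree := by
    rw [← hspan, Submodule.span_le]
    rintro _ ⟨j, rfl⟩
    simpa [agree, sub_eq_zero] using huv j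
  funext w
  simpa [agree, sub_eq_zero] using hagree (Submodule.subset_span ⟨w, rfl⟩)

end Matrix

namespace SimpleGraph

variable {V α : Type*} (G : SimpleGraph V) [DecidableRel G.Adj]

theorem adjMatrix_apply_eq_adjMatrix_apply_iff [Zero α] [One α] [NeZero (1 : α)] {u v w : V} :
    G.adjMatrix α u w = G.adjMatrix α v w ↔ (G.Adj u w ↔ G.Adj v w) := by
  by_cases hu : G.Adj u w <;> by_cases hv : G.Adj v w <;> simp [hu, hv]

end SimpleGraph

open Matrix SimpleGraph in
theorem neighborSet_inter_ne_of_outside {V : Type*} [Fintype V]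
    (G : SimpleGraph V) [DecidableRel G.Adj]
    (hred : ∀ x y : V, G.neighborSet x = G.neighborSet y → x = y)
    (s : Set V) [Fintype s]
    (hrank : ((G.adjMatrix ℚ).submatrix ((↑) : s → V) ((↑) : s → V)).rank
      = (G.adjMatrix ℚ).rank)
    (v : V) (hv : v ∉ s) :
    ∀ u ∈ s, G.neighborSet v ∩ s ≠ G.neighborSet u ∩ s := by
  intro u hu hvu
  have hagree (j : s) : G.adjMatrix ℚ u j = G.adjMatrix ℚ v j := by
    have := congrArg (j.1 ∈ ·) hvu
    simp only [Set.mem_inter_iff, mem_neighborSet, j.2, and_true, eq_iff_iff] at this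
    exact G.adjMatrix_apply_eq_adjMatrix_apply_iff.2 this.symm
  have hrow := (G.adjMatrix ℚ).row_eq_of_rank_submatrix_id_eq _
    (rank_submatrix_id_eq_of_rank_submatrix_eq _ _ _ hrank) hagree
  have hN : G.neighborSet u = G.neighborSet v := Set.ext fun w =>
    G.adjMatrix_apply_eq_adjMatrix_apply_iff.1 (congrFun hrow w)
  exact hv (hred u v hN ▸ hu)
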